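/- If for some simultaneous substitution σ the λ-term σ(t) is solvable, then t is solvable. -/
import Mathlib



namespace SO

/-- Untyped λ-terms in de Bruijn notation (modulo α-equivalence). -/
inductive Term : Type
  | var : ℕ → Term
  | lam : Term → Term
  | app : Term → Term → Term
deriving DecidableEq

namespace Term

/-- Shift the free variables `≥ c` up by one. -/
def lift (c : ℕ) : Term → Term
  | var i => if i < c then var i else var (i + 1)
  | lam t => lam (lift (c + 1) t)
  | app t u => app (lift c t) (lift c u)

/-- Substitute `s` for the free variable `j`. -/
def subst (j : ℕ) (s : Term) : Term → Term
  | var i => if i = j then s else if j < i then var (i - 1) else var i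
  | lam t => lam (subst (j + 1) (lift 0 s) t)
  | app t u => app (subst j s t) (subst j s u)

/-- One step of β-reduction (anywhere in the term). -/
inductive Beta : Term → Term → Prop
  | beta : Beta (app (lam t) u) (subst 0 u t)
  | appL : Beta t t' → Beta (app t u) (app t' u)
  | appR : Beta u u' → Beta (app t u) (app t u')
  | lam : Beta t t' → Beta (lam t) (lam t')

/-- β-equivalence `u ≃β v`. -/
def BetaEq : Term → Term → Prop := Relation.EqvGen Beta

/-- One step of head reduction: a term `λx₁…λxₙ (λx u)v w̄` reduces its head redex. -/
inductive HeadStep : Term → Term → Prop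
  | beta : HeadStep (app (lam t) u) (subst 0 u t)
  | app : HeadStep (app t u) w → HeadStep (app (app t u) v) (app w v)
  | lam : HeadStep t t' → HeadStep (lam t) (lam t')

/-- `u ≻ v` : `v` is obtained from `u` by finitely many head-reduction steps. -/
def HeadRed : Term → Term → Prop := Relation.ReflTransGen HeadStep

/-- Head normal form: no head-reduction step applies. -/
def IsHNF (t : Term) : Prop := ∀ u, ¬ HeadStep t u

/-- `t` is solvable iff the head reduction of `t` terminates. -/
def Solvable (t : Term) : Prop := ∃ u, HeadRed t u ∧ IsHNF u

/-- `FreeIn k t` : the variable (de Bruijn index) `k` occurs free in `t`. -/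
def FreeIn (k : ℕ) : Term → Prop
  | var i => i = k
  | lam t => FreeIn (k + 1) t
  | app t u => FreeIn k t ∨ FreeIn k u

/-- A term is closed iff it has no free variables. -/
def Closed (t : Term) : Prop := ∀ k, ¬ FreeIn k t

/-- `(u)^n v` : `u` applied `n` times to `v`. -/
def iterApp (u : Term) : ℕ → Term → Term
  | 0, v => v
  | n + 1, v => app u (iterApp u n v)

/-- The Church integer `n̄ = λf λx (f)^n x`. -/
def church (n : ℕ) : Term := lam (lam (iterApp (var 1) n (var 0)))

/-- A closed λ-term `S` is a successor iff `(S)k̄ ≃β (k+1)‾` for every `k`. -/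
def IsSuccessor (S : Term) : Prop :=
  Closed S ∧ ∀ k : ℕ, BetaEq (app S (church k)) (church (k + 1))

/-- A closed λ-term `T` is a storage operator iff for every `n ≥ 0` there is a closed
`τₙ ≃β n̄` such that for every `θₙ ≃β n̄` and fresh variable `f`,
`(T)θₙ f ≻ (f)τₙ`. -/
def IsStorageOp (T : Term) : Prop :=
  Closed T ∧ ∀ n : ℕ, ∃ τ : Term, Closed τ ∧ BetaEq τ (church n) ∧
    ∀ (θ : Term) (f : ℕ), BetaEq θ (church n) → ¬ FreeIn f θ →
      HeadRed (app (app T θ) (var f)) (app (var f) τ)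

end Term

end SO

namespace SO
namespace Term

/-- Simultaneous substitution of terms for the free variables (with the
suitable de Bruijn lifting playing the role of the renaming of bound variables). -/
def substAll (sigma : ℕ → Term) : Term → Term
  | var i => sigma i
  | lam t => lam (substAll (fun i => match i with
      | 0 => var 0
      | j + 1 => lift 0 (sigma j)) t)
  | app t u => app (substAll sigma t) (substAll sigma u)

/-- `HeadRedN n u v` : `u ≻ v` by a head reduction of length exactly `n`. -/
inductive HeadRedN : ℕ → Term → Term → Prop
  | refl : HeadRedN 0 t t
  | step : HeadStep t u → HeadRedN n u v → HeadRedN (n + 1) t v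

end Term
end SO


namespace SO
namespace Term

def up (σ : ℕ → Term) : ℕ → Term := fun i => match i with
  | 0 => var 0
  | j + 1 => lift 0 (σ j)

def upn : ℕ → (ℕ → Term) → ℕ → Term
  | 0, σ => σ
  | c + 1, σ => up (upn c σ)

def liftn : ℕ → Term → Term
  | 0, t => t
  | n + 1, t => lift 0 (liftn n t)

lemma substAll_lam (σ : ℕ → Term) (t : Term) :
    substAll σ (lam t) = lam (substAll (up σ) t) := rfl

lemma lift_lift (s : Term) : ∀ c d, c ≤ d → lift c (lift d s) = lift (d+1) (lift c s) := by
  induction s with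
  | var i =>
    intro c d h
    simp only [lift]
    split_ifs <;> simp only [lift] <;> split_ifs <;> first | rfl | omega
  | lam t ih => intro c d h; simp only [lift]; rw [ih (c+1) (d+1) (by omega)]
  | app t u iht ihu => intro c d h; simp only [lift, iht _ _ h, ihu _ _ h]

lemma lift_liftn (c : ℕ) (u : Term) : lift c (liftn c u) = liftn (c+1) u := by
  induction c with
  | zero => rfl
  | succ c ih =>
    show lift (c+1) (lift 0 (liftn c u)) = lift 0 (liftn (c+1) u)
    rw [← lift_lift (liftn c u) 0 c (by omega), ih]

lemma subst_lift (w : Term) : ∀ j s, subst j s (lift j w) = w := by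
  induction w with
  | var i =>
    intro j s
    simp only [lift]
    split_ifs <;> simp only [subst] <;> split_ifs <;> first | rfl | omega | (congr 1; omega)
  | lam t ih => intro j s; simp only [lift, subst, ih]
  | app t u iht ihu => intro j s; simp only [lift, subst, iht, ihu]

lemma upn_lt (σ : ℕ → Term) : ∀ c i, i < c → upn c σ i = var i := by
  intro c
  induction c with
  | zero => omega
  | succ c ih =>
    intro i hi
    match i with
    | 0 => rfl
    | j + 1 =>
      show lift 0 (upn c σ j) = var (j+1)
      rw [ih j (by omega)]
      simp [lift]

lemma upn_ge (σ : ℕ → Term) : ∀ c i, c ≤ i → upn c σ i = liftn c (σ (i - c)) := by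
  intro c
  induction c with
  | zero => intro i _; rfl
  | succ c ih =>
    intro i hi
    match i with
    | 0 => omega
    | j + 1 =>
      show lift 0 (upn c σ j) = liftn (c+1) (σ (j + 1 - (c+1)))
      rw [ih j (by omega), show j + 1 - (c+1) = j - c from by omega]
      rfl

lemma liftn_lift0 (x : Term) : ∀ c, liftn c (lift 0 x) = lift 0 (liftn c x) := by
  intro c
  induction c with
  | zero => rfl
  | succ c ih => show lift 0 (liftn c (lift 0 x)) = _; rw [ih]; rfl

lemma substAll_var (σ : ℕ → Term) (i : ℕ) : substAll σ (var i) = σ i := rfl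

lemma subst_var_lt {i j : ℕ} (s : Term) (h : i < j) : subst j s (var i) = var i := by
  simp only [subst]; rw [if_neg (by omega), if_neg (by omega)]

lemma subst_var_eq (j : ℕ) (s : Term) : subst j s (var j) = s := by simp [subst]

lemma subst_var_gt {i j : ℕ} (s : Term) (h : j < i) : subst j s (var i) = var (i-1) := by
  simp only [subst]; rw [if_neg (by omega), if_pos h]

lemma substAll_lift (s : Term) : ∀ c σ,
    substAll (upn c (up σ)) (lift c s) = lift c (substAll (upn c σ) s) := by
  induction s with
  | var i =>
    intro c σ
    by_cases hi : i < c
    · simp only [lift, if_pos hi, substAll, upn_lt _ _ _ hi,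
        upn_lt _ _ _ (show i < c from hi)]
    · simp only [lift, if_neg hi, substAll]
      rw [upn_ge _ c (i+1) (by omega), upn_ge _ c i (by omega)]
      have h1 : i + 1 - c = (i - c) + 1 := by omega
      rw [h1]
      show liftn c (lift 0 (σ (i - c))) = lift c (liftn c (σ (i - c)))
      rw [lift_liftn, liftn_lift0]
      rfl
  | lam t ih =>
    intro c σ
    show lam (substAll (up (upn c (up σ))) (lift (c+1) t)) =
      lam (lift (c+1) (substAll (up (upn c σ)) t))
    rw [show up (upn c (up σ)) = upn (c+1) (up σ) from rfl,
        show up (upn c σ) = upn (c+1) σ from rfl, ih (c+1) σ]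
  | app t u iht ihu => intro c σ; simp only [lift, substAll, iht, ihu]

lemma substAll_liftn (b : Term) (σ : ℕ → Term) : ∀ j,
    substAll (upn j σ) (liftn j b) = liftn j (substAll σ b) := by
  intro j
  induction j with
  | zero => rfl
  | succ j ih =>
    show substAll (up (upn j σ)) (lift 0 (liftn j b)) = lift 0 (liftn j (substAll σ b))
    rw [← ih]
    exact substAll_lift (liftn j b) 0 (upn j σ)

lemma substAll_subst (a : Term) : ∀ j σ b,
    substAll (upn j σ) (subst j (liftn j b) a) =
      subst j (liftn j (substAll σ b)) (substAll (upn (j+1) σ) a) := by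
  induction a with
  | var i =>
    intro j σ b
    rcases lt_trichotomy i j with hij | rfl | hij
    · rw [subst_var_lt _ hij, substAll_var, substAll_var, upn_lt _ _ _ hij,
        upn_lt _ _ _ (show i < j+1 by omega), subst_var_lt _ hij]
    · rw [subst_var_eq, substAll_liftn, substAll_var, upn_lt _ _ _ (by omega),
        subst_var_eq]
    · rw [subst_var_gt _ hij, substAll_var, substAll_var, upn_ge _ j (i-1) (by omega),
        upn_ge _ (j+1) i (by omega), show i - 1 - j = i - (j+1) from by omega,
        show liftn (j+1) (σ (i - (j+1))) = lift j (liftn j (σ (i - (j+1)))) from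
          (lift_liftn j _).symm, subst_lift]
  | lam t ih =>
    intro j σ b
    show lam (substAll (up (upn j σ)) (subst (j+1) (lift 0 (liftn j b)) t)) =
      lam (subst (j+1) (lift 0 (liftn j (substAll σ b))) (substAll (up (upn (j+1) σ)) t))
    rw [show up (upn j σ) = upn (j+1) σ from rfl,
        show up (upn (j+1) σ) = upn (j+2) σ from rfl,
        show lift 0 (liftn j b) = liftn (j+1) b from rfl,
        show lift 0 (liftn j (substAll σ b)) = liftn (j+1) (substAll σ b) from rfl,
        ih (j+1) σ b]
  | app t u iht ihu => intro j σ b; simp only [subst, substAll, iht, ihu]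

lemma substAll_subst0 (σ : ℕ → Term) (a b : Term) :
    substAll σ (subst 0 b a) = subst 0 (substAll σ b) (substAll (up σ) a) :=
  substAll_subst a 0 σ b

lemma headStep_substAll {t u : Term} (h : HeadStep t u) : ∀ σ,
    HeadStep (substAll σ t) (substAll σ u) := by
  induction h with
  | @beta a b =>
    intro σ
    rw [substAll_subst0]
    exact HeadStep.beta
  | @app t u w v hv ih =>
    intro σ
    exact HeadStep.app (ih σ)
  | lam h ih =>
    intro σ
    exact HeadStep.lam (ih (up σ))

lemma headStep_det {t u v : Term} (h1 : HeadStep t u) (h2 : HeadStep t v) : u = v := by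
  induction h1 generalizing v with
  | beta => cases h2; rfl
  | app h ih => cases h2 with
    | app h' => rw [ih h']
  | lam h ih => cases h2 with
    | lam h' => rw [ih h']

lemma progress (t : Term) : (∃ u, HeadStep t u) ∨ IsHNF t := by
  induction t with
  | var i => right; intro u h; cases h
  | lam t ih =>
    rcases ih with ⟨u, hu⟩ | hnf
    · exact Or.inl ⟨lam u, HeadStep.lam hu⟩
    · right; intro u h; cases h with | lam h' => exact hnf _ h'
  | app t u iht ihu =>
    cases t with
    | var i => right; intro w h; cases h
    | lam a => exact Or.inl ⟨subst 0 u a, HeadStep.beta⟩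
    | app a b =>
      rcases iht with ⟨w, hw⟩ | hnf
      · exact Or.inl ⟨app w u, HeadStep.app hw⟩
      · right; intro w h; cases h with | app h' => exact hnf _ h'

lemma headRed_toN {t u : Term} (h : HeadRed t u) : ∃ n, HeadRedN n t u := by
  induction h using Relation.ReflTransGen.head_induction_on with
  | refl => exact ⟨0, HeadRedN.refl⟩
  | head hstep _ ih =>
    obtain ⟨n, hn⟩ := ih
    exact ⟨n+1, HeadRedN.step hstep hn⟩

end Term
end SO

open SO Term

/-- If for some simultaneous substitution `σ` the λ-term `σ(t)` is solvable,
then `t` is solvable. -/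
theorem solvable_of_substAll_solvable (sigma : ℕ → SO.Term) (t : SO.Term)
    (h : Solvable (substAll sigma t)) : Solvable t := by
  obtain ⟨u, hr, hnf⟩ := h
  obtain ⟨n, hn⟩ := headRed_toN hr
  clear hr
  induction n generalizing t with
  | zero =>
    cases hn
    rcases progress t with ⟨t', ht'⟩ | htnf
    · exact absurd (headStep_substAll ht' sigma) (hnf _)
    · exact ⟨t, Relation.ReflTransGen.refl, htnf⟩
  | succ n ih =>
    rcases progress t with ⟨t', ht'⟩ | htnf
    · cases hn with
      | step h1 h2 =>
        have := headStep_det h1 (headStep_substAll ht' sigma)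
        subst this
        obtain ⟨v, hv1, hv2⟩ := ih t' h2
        exact ⟨v, Relation.ReflTransGen.head ht' hv1, hv2⟩
    · exact ⟨t, Relation.ReflTransGen.refl, htnf⟩
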